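/- arXiv:math/0701234 — 3 statements merged into one kernel-verified Lean document; each statement's English description precedes it below -/
import Mathlib

section
/- For every integer n > |b|, the term n^2 + b has a primitive divisor if and only if its greatest prime factor exceeds 2n. -/
/-!
A prime `p ∣ n² + b` divides an earlier term `m² + b` (`0 < m < n`) exactly when `p ≤ 2n`.
If `p ∣ m² + b` as well, then `p ∣ (n - m)(n + m)` with both factors in `(0, 2n)`.
Conversely, if `p ≤ 2n` then `m = |n - p|` works: `p ∣ (n - p)² + b`, and `0 < |n - p| < n`
because `p = n` would give `p ∣ b` with `|b| < p`, and `p = 2n` is not prime.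
Hence `n² + b` has a primitive divisor iff it has a prime factor above `2n`.
-/

/-- `d` is a primitive divisor of the `n`-th term `n^2 + b`. -/
def IsPrimitiveDivisor (b n d : ℤ) : Prop :=
  1 < d ∧ d ∣ n ^ 2 + b ∧
    ∀ m : ℤ, 0 < m → m < n → m ^ 2 + b ≠ 0 → Int.gcd d (m ^ 2 + b) = 1

/-- The greatest prime factor of an integer, as the sup of the prime factors
of its absolute value. -/
def greatestPrimeFactor (m : ℤ) : ℕ := m.natAbs.primeFactors.sup id

lemma greatestPrimeFactor_mem_primeFactors {m : ℤ} (hm : 1 < m.natAbs) :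
    greatestPrimeFactor m ∈ m.natAbs.primeFactors := by
  obtain ⟨p, hp, hsup⟩ :=
    Finset.exists_mem_eq_sup _ (Nat.nonempty_primeFactors.mpr hm) id
  rwa [greatestPrimeFactor, hsup]

lemma le_greatestPrimeFactor {m : ℤ} (hm : m ≠ 0) {p : ℕ} (hp : p.Prime) (hpm : (p : ℤ) ∣ m) :
    p ≤ greatestPrimeFactor m :=
  Finset.le_sup (f := id) <|
    Nat.mem_primeFactors.mpr ⟨hp, Int.ofNat_dvd_left.mp hpm, Int.natAbs_ne_zero.mpr hm⟩

lemma IsPrimitiveDivisor.of_dvd {b n d e : ℤ} (hd : IsPrimitiveDivisor b n d) (he : 1 < e)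
    (hed : e ∣ d) : IsPrimitiveDivisor b n e :=
  ⟨he, hed.trans hd.2.1, fun m hm0 hmn hm => Nat.eq_one_of_dvd_one <|
    hd.2.2 m hm0 hmn hm ▸ Int.gcd_dvd_gcd_of_dvd_left _ hed⟩

lemma isPrimitiveDivisor_prime_iff {b n : ℤ} (hb : ∀ k : ℤ, b ≠ -k ^ 2) {p : ℕ} (hp : p.Prime)
    (hpn : (p : ℤ) ∣ n ^ 2 + b) :
    IsPrimitiveDivisor b n p ↔ ¬∃ m : ℤ, 0 < m ∧ m < n ∧ (p : ℤ) ∣ m ^ 2 + b := by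
  have hcop (x : ℤ) : Int.gcd p x = 1 ↔ ¬(p : ℤ) ∣ x := by
    rw [← Int.isCoprime_iff_gcd_eq_one]
    exact (Nat.prime_iff_prime_int.mp hp).irreducible.coprime_iff_not_dvd
  constructor
  · rintro ⟨-, -, hprim⟩ ⟨m, hm0, hmn, hpm⟩
    have hm : m ^ 2 + b ≠ 0 := fun h => hb m (by linarith)
    exact (hcop _).mp (hprim m hm0 hmn hm) hpm
  · intro hnot
    refine ⟨by exact_mod_cast hp.one_lt, hpn, fun m hm0 hmn _ => (hcop _).mpr ?_⟩
    exact fun hpm => hnot ⟨m, hm0, hmn, hpm⟩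

lemma lt_two_mul_of_dvd_sq_add {b n m p : ℤ} (hp : Prime p) (hpn : p ∣ n ^ 2 + b)
    (hpm : p ∣ m ^ 2 + b) (hm0 : 0 < m) (hmn : m < n) : p < 2 * n := by
  have hprod : p ∣ (n - m) * (n + m) := by
    rw [show (n - m) * (n + m) = n ^ 2 + b - (m ^ 2 + b) by ring]
    exact dvd_sub hpn hpm
  rcases hp.dvd_or_dvd hprod with h | h
  · linarith [Int.le_of_dvd (by linarith) h]
  · linarith [Int.le_of_dvd (by linarith) h]

lemma exists_dvd_sq_add_of_le_two_mul {b n : ℤ} (hb : b ≠ 0) (hn : |b| < n) {p : ℕ}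
    (hp : p.Prime) (hpn : (p : ℤ) ∣ n ^ 2 + b) (hp2n : (p : ℤ) ≤ 2 * n) :
    ∃ m : ℤ, 0 < m ∧ m < n ∧ (p : ℤ) ∣ m ^ 2 + b := by
  have hn2 : 2 ≤ n := by linarith [Int.one_le_abs hb]
  have hpb : (p : ℤ) ≠ n := by
    rintro rfl
    have hdvd : (p : ℤ) ∣ b := by
      rw [show b = (p : ℤ) ^ 2 + b - (p : ℤ) ^ 2 by ring]
      exact dvd_sub hpn (dvd_pow_self _ two_ne_zero)
    exact hb (Int.eq_zero_of_abs_lt_dvd hdvd hn)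
  have hp2 : (p : ℤ) ≠ 2 * n := by
    intro h
    have h2 : 2 ∣ p := Int.natCast_dvd_natCast.mp (h ▸ dvd_mul_right 2 n)
    have : p = 2 := ((Nat.prime_dvd_prime_iff_eq Nat.prime_two hp).mp h2).symm
    omega
  refine ⟨|n - p|, abs_pos.mpr (sub_ne_zero.mpr hpb.symm), ?_, ?_⟩
  · have hp0 : (0 : ℤ) < p := by exact_mod_cast hp.pos
    rw [abs_lt]
    constructor <;> omega
  · rw [sq_abs, show (n - p) ^ 2 + b = n ^ 2 + b - p * (2 * n - p) by ring]
    exact dvd_sub hpn (dvd_mul_right _ _)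

/-- For every integer `n > |b|`, the term `n^2 + b` has a primitive divisor
if and only if its greatest prime factor exceeds `2n`. -/
theorem stmt_2 (b : ℤ) (hb : ∀ k : ℤ, b ≠ -k^2)
    (n : ℤ) (hn : |b| < n) :
    (∃ d : ℤ, IsPrimitiveDivisor b n d) ↔
      2 * n < (greatestPrimeFactor (n ^ 2 + b) : ℤ) := by
  have hb0 : b ≠ 0 := fun h => hb 0 (by simp [h])
  have hP : 1 < (n ^ 2 + b).natAbs := by
    have : 1 < n ^ 2 + b := by nlinarith [neg_abs_le b, Int.one_le_abs hb0]
    omega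
  constructor
  · rintro ⟨d, hd⟩
    obtain ⟨p, hp, hpd⟩ := Nat.exists_prime_and_dvd (show d.natAbs ≠ 1 by have := hd.1; omega)
    have hpd : (p : ℤ) ∣ d := Int.ofNat_dvd_left.mpr hpd
    have hpP : (p : ℤ) ∣ n ^ 2 + b := hpd.trans hd.2.1
    have hprim := hd.of_dvd (by exact_mod_cast hp.one_lt) hpd
    have h2n : 2 * n < p := by
      by_contra! hle
      exact (isPrimitiveDivisor_prime_iff hb hp hpP).mp hprim
        (exists_dvd_sq_add_of_le_two_mul hb0 hn hp hpP hle)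
    exact h2n.trans_le (by exact_mod_cast le_greatestPrimeFactor (by omega) hp hpP)
  · intro h2n
    obtain ⟨hq, hqP, -⟩ := Nat.mem_primeFactors.mp (greatestPrimeFactor_mem_primeFactors hP)
    have hqP : (greatestPrimeFactor (n ^ 2 + b) : ℤ) ∣ n ^ 2 + b := Int.ofNat_dvd_left.mpr hqP
    refine ⟨_, (isPrimitiveDivisor_prime_iff hb hq hqP).mpr ?_⟩
    rintro ⟨m, hm0, hmn, hqm⟩
    exact h2n.not_gt (lt_two_mul_of_dvd_sq_add (Nat.prime_iff_prime_int.mp hq) hqP hqm hm0 hmn)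
end

section
/- For every integer n > |b|, if n^2 + b has a primitive divisor d, then d is prime; moreover the primitive divisor is unique, i.e., any two primitive divisors of n^2 + b are equal. -/
lemma key_lemma (b : ℤ) (hb : ∀ k : ℤ, b ≠ -k^2) (n : ℤ) (hn : |b| < n)
    (d : ℤ) (hd : IsPrimitiveDivisor b n d) (p : ℕ) (hp : p.Prime)
    (hpd : (p:ℤ) ∣ d) : 2 * n ≤ (p:ℤ) := by
  obtain ⟨hd1, hdN, hprim⟩ := hd
  have hb0 : 0 ≤ |b| := abs_nonneg b
  have hb' := abs_lt.mp hn
  have hn1 : 1 ≤ n := by omega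
  have hpN : (p:ℤ) ∣ n^2 + b := hpd.trans hdN
  have hp0 : (1:ℤ) < p := by exact_mod_cast hp.one_lt
  have hpP : Prime (p:ℤ) := Nat.prime_iff_prime_int.mp hp
  by_contra h
  push_neg at h
  rcases lt_trichotomy (p:ℤ) n with hlt | heq | hgt
  · set m := n - (p:ℤ) with hm
    have hm0 : 0 < m := by omega
    have hmn : m < n := by omega
    have hmb : m^2 + b ≠ 0 := fun h0 => hb m (by linarith)
    have hpm : (p:ℤ) ∣ m^2 + b := by
      have he : m^2 + b = (n^2 + b) - (p:ℤ) * (2*n - p) := by ring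
      rw [he]
      exact dvd_sub hpN (Dvd.intro _ rfl)
    have hco : IsCoprime d (m^2 + b) :=
      Int.isCoprime_iff_gcd_eq_one.mpr (hprim m hm0 hmn hmb)
    exact hpP.not_unit (hco.isUnit_of_dvd' hpd hpm)
  · have hpb : (p:ℤ) ∣ b := by
      have : b = (n^2 + b) - (p:ℤ) * n := by rw [heq]; ring
      rw [this]
      exact dvd_sub hpN (Dvd.intro _ rfl)
    have : b = 0 := Int.eq_zero_of_abs_lt_dvd hpb (by omega)
    exact hb 0 (by simpa using this)
  · set m := (p:ℤ) - n with hm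
    have hm0 : 0 < m := by omega
    have hmn : m < n := by omega
    have hmb : m^2 + b ≠ 0 := fun h0 => hb m (by linarith)
    have hpm : (p:ℤ) ∣ m^2 + b := by
      have he : m^2 + b = (n^2 + b) + (p:ℤ) * (p - 2*n) := by ring
      rw [he]
      exact dvd_add hpN (Dvd.intro _ rfl)
    have hco : IsCoprime d (m^2 + b) :=
      Int.isCoprime_iff_gcd_eq_one.mpr (hprim m hm0 hmn hmb)
    exact hpP.not_unit (hco.isUnit_of_dvd' hpd hpm)

/-- For `n > |b|`, any primitive divisor of `n^2 + b` is prime, and any two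
primitive divisors of `n^2 + b` are equal. -/
theorem stmt_3 (b : ℤ) (hb : ∀ k : ℤ, b ≠ -k^2)
    (n : ℤ) (hn : |b| < n) :
    (∀ d : ℤ, IsPrimitiveDivisor b n d → Prime d) ∧
    (∀ d d' : ℤ, IsPrimitiveDivisor b n d → IsPrimitiveDivisor b n d' → d = d') := by
  have hb' := abs_lt.mp hn
  have hn1 : 1 ≤ n := by have := abs_nonneg b; omega
  have hNpos : 0 < n^2 + b := by nlinarith
  have hNlt : n^2 + b < 4*n^2 := by nlinarith
  have hprime : ∀ d : ℤ, IsPrimitiveDivisor b n d → Prime d := by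
    intro d hd
    obtain ⟨hd1, hdN, -⟩ := id hd
    set a := d.natAbs with ha
    have hda : (a:ℤ) = d := Int.natAbs_of_nonneg (by omega)
    have ha1 : 1 < a := by omega
    have haN : (a:ℤ) ∣ n^2 + b := hda ▸ hdN
    have haleN : (a:ℤ) ≤ n^2 + b := Int.le_of_dvd hNpos haN
    rw [Int.prime_iff_natAbs_prime]
    by_contra hnp
    have hpf := Nat.minFac_prime (Nat.ne_of_gt ha1)
    have hpd : ((a.minFac : ℕ):ℤ) ∣ d := by
      rw [← hda]
      exact_mod_cast Nat.minFac_dvd a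
    have hk := key_lemma b hb n hn d hd a.minFac hpf hpd
    have hsq : (a.minFac)^2 ≤ a := Nat.minFac_sq_le_self (by omega) hnp
    have hsq' : ((a.minFac:ℤ))^2 ≤ (a:ℤ) := by exact_mod_cast hsq
    nlinarith
  refine ⟨hprime, fun d d' hd hd' => ?_⟩
  have hp := hprime d hd
  have hp' := hprime d' hd'
  obtain ⟨hd1, hdN, -⟩ := id hd
  obtain ⟨hd1', hdN', -⟩ := id hd'
  by_contra hne
  set a := d.natAbs with ha
  set a' := d'.natAbs with ha'
  have hda : (a:ℤ) = d := Int.natAbs_of_nonneg (by omega)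
  have hda' : (a':ℤ) = d' := Int.natAbs_of_nonneg (by omega)
  have hap : a.Prime := Int.prime_iff_natAbs_prime.mp hp
  have hap' : a'.Prime := Int.prime_iff_natAbs_prime.mp hp'
  have hane : a ≠ a' := fun h => hne (by rw [← hda, ← hda', h])
  have hco : Nat.Coprime a a' := (Nat.coprime_primes hap hap').mpr hane
  have h1 : a ∣ (n^2 + b).natAbs := Int.natAbs_dvd_natAbs.mpr hdN
  have h2 : a' ∣ (n^2 + b).natAbs := Int.natAbs_dvd_natAbs.mpr hdN'
  have hmul : a * a' ∣ (n^2 + b).natAbs := hco.mul_dvd_of_dvd_of_dvd h1 h2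
  have hle : ((a:ℤ) * a') ≤ n^2 + b := by
    have h3 := Nat.le_of_dvd (by simpa [Int.natAbs_pos] using hNpos.ne') hmul
    have h4 : ((n^2+b).natAbs : ℤ) = n^2 + b := Int.natAbs_of_nonneg hNpos.le
    calc ((a:ℤ) * a') = ((a*a' : ℕ) : ℤ) := by push_cast; ring
      _ ≤ ((n^2+b).natAbs : ℤ) := by exact_mod_cast h3
      _ = n^2 + b := h4
  have hk1 : 2*n ≤ (a:ℤ) := key_lemma b hb n hn d hd a hap (hda ▸ dvd_refl d)
  have hk2 : 2*n ≤ (a':ℤ) := key_lemma b hb n hn d' hd' a' hap' (hda' ▸ dvd_refl d')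
  nlinarith
end

section
/- If a prime p satisfies p ≥ 2x for a positive integer x, then p^2 does not divide the product Q_x = ∏_{n=1}^{x} (n^2 + 1); in particular the exponent of p in Q_x is at most 1. -/
open Finset

/-- If a prime `p` satisfies `p ≥ 2x` for a positive integer `x`, then `p^2`
does not divide `Q_x = ∏_{n=1}^x (n^2 + 1)`; in particular the exponent of `p`
in `Q_x` is at most 1. -/
theorem stmt_7 (x : ℕ) (hx : 0 < x) (p : ℕ) (hp : p.Prime) (hpx : 2 * x ≤ p) :
    ¬ p ^ 2 ∣ (∏ n ∈ Finset.Icc 1 x, (n ^ 2 + 1)) ∧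
    (∏ n ∈ Finset.Icc 1 x, (n ^ 2 + 1)).factorization p ≤ 1 := by
  have hQne : (∏ n ∈ Finset.Icc 1 x, (n ^ 2 + 1)) ≠ 0 := by
    apply Finset.prod_ne_zero_iff.mpr
    intro n _
    omega
  -- key uniqueness
  have key0 : ∀ m n : ℕ, 1 ≤ m → n ≤ x → m < n →
      p ∣ m ^ 2 + 1 → p ∣ n ^ 2 + 1 → False := by
    intro m n hm hn hlt hdm hdn
    have hdz : (p : ℤ) ∣ ((n : ℤ) - m) * ((n : ℤ) + m) := by
      have h1 : (p : ℤ) ∣ (n : ℤ) ^ 2 + 1 := by exact_mod_cast Int.natCast_dvd_natCast.mpr hdn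
      have h2 : (p : ℤ) ∣ (m : ℤ) ^ 2 + 1 := by exact_mod_cast Int.natCast_dvd_natCast.mpr hdm
      have : (p : ℤ) ∣ ((n : ℤ) ^ 2 + 1) - ((m : ℤ) ^ 2 + 1) := dvd_sub h1 h2
      have heq : ((n : ℤ) ^ 2 + 1) - ((m : ℤ) ^ 2 + 1) = ((n : ℤ) - m) * ((n : ℤ) + m) := by
        ring
      rwa [heq] at this
    have hpz : Prime (p : ℤ) := Nat.prime_iff_prime_int.mp hp
    rcases hpz.dvd_mul.mp hdz with h | h
    · have := Int.le_of_dvd (by omega) h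
      omega
    · have := Int.le_of_dvd (by omega) h
      omega
  have key : ∀ m ∈ Finset.Icc 1 x, ∀ n ∈ Finset.Icc 1 x,
      p ∣ m ^ 2 + 1 → p ∣ n ^ 2 + 1 → m = n := by
    intro m hm n hn hdm hdn
    simp only [Finset.mem_Icc] at hm hn
    by_contra hne
    rcases Nat.lt_or_ge m n with hlt | hge
    · exact key0 m n hm.1 hn.2 hlt hdm hdn
    · exact key0 n m hn.1 hm.2 (by omega) hdn hdm
  -- each factor has valuation ≤ 1
  have hval : ∀ n ∈ Finset.Icc 1 x, (n ^ 2 + 1).factorization p ≤ 1 := by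
    intro n hn
    simp only [Finset.mem_Icc] at hn
    by_contra h
    push_neg at h
    have : p ^ 2 ∣ n ^ 2 + 1 :=
      (Nat.Prime.pow_dvd_iff_le_factorization hp (by omega)).mpr h
    have hle := Nat.le_of_dvd (by omega) this
    nlinarith [hp.two_le]
  have hsum : (∏ n ∈ Finset.Icc 1 x, (n ^ 2 + 1)).factorization p ≤ 1 := by
    rw [Nat.factorization_prod (fun n _ => by omega)]
    simp only [Finsupp.finset_sum_apply]
    set S := (Finset.Icc 1 x).filter (fun n => p ∣ n ^ 2 + 1) with hS
    have hzero : ∀ n ∈ Finset.Icc 1 x, n ∉ S → (n ^ 2 + 1).factorization p = 0 := by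
      intro n hn hns
      apply Nat.factorization_eq_zero_of_not_dvd
      intro hd
      exact hns (Finset.mem_filter.mpr ⟨hn, hd⟩)
    rw [← Finset.sum_filter_ne_zero]
    have hsub : (Finset.Icc 1 x).filter (fun n => (n ^ 2 + 1).factorization p ≠ 0) ⊆ S := by
      intro n hn
      have hn' := Finset.mem_filter.mp hn
      refine Finset.mem_filter.mpr ⟨hn'.1, ?_⟩
      by_contra hd
      exact hn'.2 (Nat.factorization_eq_zero_of_not_dvd hd)
    have hcard : S.card ≤ 1 := by
      apply Finset.card_le_one.mpr
      intro a ha b hb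
      simp only [hS, Finset.mem_filter] at ha hb
      exact key a ha.1 b hb.1 ha.2 hb.2
    calc ∑ n ∈ (Finset.Icc 1 x).filter (fun n => (n ^ 2 + 1).factorization p ≠ 0),
          (n ^ 2 + 1).factorization p
        ≤ ∑ _n ∈ (Finset.Icc 1 x).filter (fun n => (n ^ 2 + 1).factorization p ≠ 0), 1 := by
          apply Finset.sum_le_sum
          intro n hn
          exact hval n (Finset.mem_filter.mp hn).1
      _ = ((Finset.Icc 1 x).filter (fun n => (n ^ 2 + 1).factorization p ≠ 0)).card := by simp
      _ ≤ S.card := Finset.card_le_card hsub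
      _ ≤ 1 := hcard
  refine ⟨?_, hsum⟩
  intro hdvd
  have := (Nat.Prime.pow_dvd_iff_le_factorization hp hQne).mp hdvd
  omega
end
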